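/- arXiv:2208.00144 — 3 statements merged into one kernel-verified Lean document; each statement's English description precedes it below -/
import Mathlib

section
/- Let X +_f W be an Artin–Wraith glueing and let π : Y → X and ϖ : Z → W be continuous maps between topological spaces. Let f* be the pullback of f with respect to π and id_W, let (f*)* be the pullback of f* with respect to id_Y and ϖ, and let f** be the pullback of f with respect to π and ϖ. Then the maps id+id : Y +_{f**} Z → Y +_{(f*)*} Z, id+ϖ : Y +_{(f*)*} Z → Y +_{f*} W and π+id : Y +_{f*} W → X +_f W are all continuous. Consequently, for every admissible map g : Closed(Y) → Closed(Z) such that π+ϖ : Y +_g Z → X +_f W is continuous, the map id+ϖ : Y +_g Z → Y +_{f*} W is continuous. -/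
namespace Paper

open Set Topology

/-! ### Coarse structures -/

/-- The inverse of a relation `e ⊆ X × X`. -/
def invRel {X : Type*} (e : Set (X × X)) : Set (X × X) := {p | (p.2, p.1) ∈ e}

/-- The composition of relations: `compRel e e' = {(a,b) | ∃ c, (a,c) ∈ e ∧ (c,b) ∈ e'}`.
This is `e' ∘ e` in the paper's notation. -/
def compRel {X : Type*} (e e' : Set (X × X)) : Set (X × X) :=
  {p | ∃ c, (p.1, c) ∈ e ∧ (c, p.2) ∈ e'}

/-- A coarse structure on a set `X`. -/
def IsCoarseStructure {X : Type*} (ε : Set (Set (X × X))) : Prop :=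
  Set.diagonal X ∈ ε ∧
  (∀ e ∈ ε, ∀ e' : Set (X × X), e' ⊆ e → e' ∈ ε) ∧
  (∀ e ∈ ε, ∀ e' ∈ ε, e ∪ e' ∈ ε) ∧
  (∀ e ∈ ε, invRel e ∈ ε) ∧
  (∀ e ∈ ε, ∀ e' ∈ ε, compRel e e' ∈ ε)

/-- The coarse structure generated by a family `A` of subsets of `X × X`:
the intersection of all coarse structures containing `A`. -/
def genCoarse {X : Type*} (A : Set (Set (X × X))) : Set (Set (X × X)) :=
  ⋂₀ {ε | IsCoarseStructure ε ∧ A ⊆ ε}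

/-- The `u`-neighbourhood `𝔅(B, u)` of a subset `B`. -/
def Bnh {X : Type*} (B : Set X) (u : Set (X × X)) : Set X := {x | ∃ y ∈ B, (x, y) ∈ u}

/-- A subset `B` is bounded for the coarse structure `ε` if `B × B ∈ ε`. -/
def CBounded {X : Type*} (ε : Set (Set (X × X))) (B : Set X) : Prop := B ×ˢ B ∈ ε

/-- A map is bornologous if it sends entourages to entourages. -/
def Bornologous {X Y : Type*} (ε : Set (Set (X × X))) (ζ : Set (Set (Y × Y)))
    (f : X → Y) : Prop :=
  ∀ e ∈ ε, Prod.map f f '' e ∈ ζ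

/-- A map is (coarsely) proper if preimages of bounded sets are bounded. -/
def CProper {X Y : Type*} (ε : Set (Set (X × X))) (ζ : Set (Set (Y × Y)))
    (f : X → Y) : Prop :=
  ∀ B : Set Y, CBounded ζ B → CBounded ε (f ⁻¹' B)

/-- A coarse map is a proper bornologous map. -/
def CoarseMap {X Y : Type*} (ε : Set (Set (X × X))) (ζ : Set (Set (Y × Y)))
    (f : X → Y) : Prop :=
  Bornologous ε ζ f ∧ CProper ε ζ f

/-- Two maps `f g : S → X` are close if `{(f s, g s) | s ∈ S}` is an entourage. -/
def Close {S X : Type*} (ε : Set (Set (X × X))) (f g : S → X) : Prop :=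
  Set.range (fun s => (f s, g s)) ∈ ε

/-- A coarse equivalence: a coarse map with a coarse quasi-inverse. -/
def CoarseEquiv {X Y : Type*} (ε : Set (Set (X × X))) (ζ : Set (Set (Y × Y)))
    (f : X → Y) : Prop :=
  CoarseMap ε ζ f ∧
    ∃ g : Y → X, CoarseMap ζ ε g ∧ Close ζ (f ∘ g) id ∧ Close ε (g ∘ f) id

/-- The subspace coarse structure on `A ⊆ Y`. -/
def SubCoarse {Y : Type*} (ζ : Set (Set (Y × Y))) (A : Set Y) : Set (Set (↥A × ↥A)) :=
  {e | Prod.map (Subtype.val : A → Y) (Subtype.val : A → Y) '' e ∈ ζ}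

/-- A coarse embedding: a coarse map which is a coarse equivalence onto its image with
the subspace coarse structure. -/
def CoarseEmbedding {X Y : Type*} (ε : Set (Set (X × X))) (ζ : Set (Set (Y × Y)))
    (f : X → Y) : Prop :=
  CoarseMap ε ζ f ∧ CoarseEquiv ε (SubCoarse ζ (Set.range f)) (Set.rangeFactorization f)

/-- A coarse space is coarsely connected if every pair lies in some entourage. -/
def CoarselyConnected {X : Type*} (ε : Set (Set (X × X))) : Prop :=
  ∀ x y : X, ∃ e ∈ ε, (x, y) ∈ e

/-- `A` is quasi-dense if `𝔅(A, e) = X` for some entourage `e`. -/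
def QuasiDense {X : Type*} (ε : Set (Set (X × X))) (A : Set X) : Prop :=
  ∃ e ∈ ε, Bnh A e = Set.univ

/-- A subset of a topological space is topologically bounded if its closure is compact. -/
def TopBounded {X : Type*} [TopologicalSpace X] (B : Set X) : Prop := IsCompact (closure B)

/-- A coarse structure on a topological space is proper if it contains a neighbourhood of
the diagonal and every bounded set is topologically bounded. -/
def ProperCoarse {X : Type*} [TopologicalSpace X] (ε : Set (Set (X × X))) : Prop :=
  (∃ e ∈ ε, e ∈ nhdsSet (Set.diagonal X)) ∧ ∀ B : Set X, CBounded ε B → TopBounded B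

/-! ### Artin–Wraith glueings -/

/-- An admissible map `f : Closed(X) → Closed(Y)`. -/
def Admissible {X Y : Type*} [TopologicalSpace X] [TopologicalSpace Y]
    (f : Set X → Set Y) : Prop :=
  (∀ A : Set X, IsClosed A → IsClosed (f A)) ∧
  (∀ A B : Set X, IsClosed A → IsClosed B → f (A ∪ B) = f A ∪ f B) ∧
  f ∅ = ∅

/-- The closed sets of the Artin–Wraith glueing `X +_f Y`. -/
def AWClosed {X Y : Type*} [TopologicalSpace X] [TopologicalSpace Y]
    (f : Set X → Set Y) : Set (Set (X ⊕ Y)) :=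
  {A | IsClosed (Sum.inl ⁻¹' A) ∧ IsClosed (Sum.inr ⁻¹' A) ∧
    Sum.inr '' f (Sum.inl ⁻¹' A) ⊆ A}

/-- The topology of the Artin–Wraith glueing `X +_f Y` on `X ⊕ Y`. (For admissible `f`,
the closed sets of this topology are exactly the members of `AWClosed f`.) -/
def AWTop {X Y : Type*} [TopologicalSpace X] [TopologicalSpace Y]
    (f : Set X → Set Y) : TopologicalSpace (X ⊕ Y) :=
  TopologicalSpace.generateFrom (compl '' AWClosed f)

/-- `X +_f W` is a (Hausdorff) compactification of `X`: a compact Hausdorff Artin–Wraith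
glueing in which `X` is dense. -/
def IsCompactification {X W : Type*} [TopologicalSpace X] [TopologicalSpace W]
    (f : Set X → Set W) : Prop :=
  Admissible f ∧
  @CompactSpace (X ⊕ W) (AWTop f) ∧
  @T2Space (X ⊕ W) (AWTop f) ∧
  @Dense (X ⊕ W) (AWTop f) (Set.range Sum.inl)

/-- A relation `e ⊆ X × X` is proper if `𝔅(B,e)` and `𝔅(B,e⁻¹)` are topologically
bounded for every topologically bounded `B`. -/
def ProperRel {X : Type*} [TopologicalSpace X] (e : Set (X × X)) : Prop :=
  ∀ B : Set X, TopBounded B → TopBounded (Bnh B e) ∧ TopBounded (Bnh B (invRel e))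

/-- `e` is a perspective subset of `X × X` with respect to the compactification `X +_f W`. -/
def PerspRel {X W : Type*} [TopologicalSpace X] [TopologicalSpace W]
    (f : Set X → Set W) (e : Set (X × X)) : Prop :=
  ProperRel e ∧
  ∀ y : W, ∀ V : Set (X ⊕ W), IsOpen[AWTop f] V → Sum.inr y ∈ V →
    ∃ U : Set (X ⊕ W), IsOpen[AWTop f] U ∧ Sum.inr y ∈ U ∧ U ⊆ V ∧
      ∀ p ∈ e, Sum.inl p.1 ∈ U → Sum.inl p.2 ∈ V

/-- A perspective compactification of the coarse space `(X, ε)`. -/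
def PerspCompactification {X W : Type*} [TopologicalSpace X] [TopologicalSpace W]
    (ε : Set (Set (X × X))) (f : Set X → Set W) : Prop :=
  IsCompactification f ∧ ∀ e ∈ ε, PerspRel f e

/-- The pullback of `f : Closed(X) → Closed(W)` with respect to `π : Y → X` and
`ϖ : Z → W`. -/
def pullbackAW {X Y Z W : Type*} [TopologicalSpace X] [TopologicalSpace Z]
    (f : Set X → Set W) (π : Y → X) (ϖ : Z → W) (A : Set Y) : Set Z :=
  closure (ϖ ⁻¹' (f (closure (π '' A))))

/-! ### Group actions -/

/-- `φ : G → X → X` is an action by homeomorphisms. -/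
def IsActionByHomeos {G X : Type*} [Group G] [TopologicalSpace X]
    (φ : G → X → X) : Prop :=
  (∀ g : G, Continuous (φ g)) ∧ (∀ x : X, φ 1 x = x) ∧
    ∀ g h : G, ∀ x : X, φ (g * h) x = φ g (φ h x)

/-- A properly discontinuous action. -/
def ProperlyDisc {G X : Type*} [TopologicalSpace X] (φ : G → X → X) : Prop :=
  ∀ K : Set X, IsCompact K → {g : G | (φ g '' K ∩ K).Nonempty}.Finite

/-- A cocompact action. -/
def CocompactAct {G X : Type*} [TopologicalSpace X] (φ : G → X → X) : Prop :=
  ∃ K : Set X, IsCompact K ∧ (⋃ g : G, φ g '' K) = Set.univ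

/-- The saturation `Sat(A) = {(φ(g,x), φ(g,x')) : g ∈ G, x, x' ∈ A}`. -/
def Sat {G X : Type*} (φ : G → X → X) (A : Set X) : Set (X × X) :=
  {p | ∃ g : G, ∃ x ∈ A, ∃ x' ∈ A, p = (φ g x, φ g x')}

/-- The coarse structure `ε_φ` on `X` generated by the saturations of topologically
bounded sets. -/
def coarseOfAction {G X : Type*} [TopologicalSpace X] (φ : G → X → X) :
    Set (Set (X × X)) :=
  genCoarse {e | ∃ A : Set X, TopBounded A ∧ e = Sat φ A}

/-- The saturation for the left multiplication action of a group on itself. -/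
def SatMul {G : Type*} [Group G] (U : Set G) : Set (G × G) :=
  {p | ∃ g : G, ∃ u ∈ U, ∃ u' ∈ U, p = (g * u, g * u')}

/-- The coarse structure `ε_G` on the group `G`, generated by the saturations of
finite subsets under the left multiplication action. -/
def coarseGroup (G : Type*) [Group G] : Set (Set (G × G)) :=
  genCoarse {e | ∃ U : Set G, U.Finite ∧ e = SatMul U}

/-- The compactification `X +_f W` is group-theoretically perspective with respect to the
action `φ`. -/
def GTPerspective {G X W : Type*} [TopologicalSpace X] [TopologicalSpace W]
    (φ : G → X → X) (f : Set X → Set W) : Prop :=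
  ∀ K : Set X, IsCompact K → ∀ y : W, ∀ U : Set (X ⊕ W),
    IsOpen[AWTop f] U → Sum.inr y ∈ U →
      ∃ V : Set (X ⊕ W), IsOpen[AWTop f] V ∧ Sum.inr y ∈ V ∧ V ⊆ U ∧
        ∀ g : G, (∃ x ∈ K, Sum.inl (φ g x) ∈ V) → ∀ x ∈ K, Sum.inl (φ g x) ∈ U

/-! ### Rays and accessibility -/

/-- A family `Ψ` of rays in `X` based at `p`: each member is a pair `(A, γ)` of a closed
unbounded subset `A ⊆ [0,∞)` containing `0` and a map `γ : ℝ → X` (regarded on `A`) which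
is injective on `A`, proper, and satisfies `γ 0 = p`. -/
def GoodRayFamily {X : Type*} [TopologicalSpace X] (p : X)
    (Ψ : Set (Set ℝ × (ℝ → X))) : Prop :=
  ∀ r ∈ Ψ, r.1 ⊆ Set.Ici (0 : ℝ) ∧ IsClosed r.1 ∧ ¬Bornology.IsBounded r.1 ∧
    (0 : ℝ) ∈ r.1 ∧ r.2 0 = p ∧ Set.InjOn r.2 r.1 ∧
    ∀ B : Set X, TopBounded B → Bornology.IsBounded (r.1 ∩ r.2 ⁻¹' B)

/-- The compactification `X +_f W` is `Ψ`-accessible. -/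
def AccessibleComp {X W : Type*} [TopologicalSpace X] [TopologicalSpace W]
    (f : Set X → Set W) (Ψ : Set (Set ℝ × (ℝ → X))) : Prop :=
  (∀ w : W, ∃ r ∈ Ψ, f (closure (r.2 '' r.1)) = {w}) ∧
  ∀ r ∈ Ψ, ∃ w : W, f (closure (r.2 '' r.1)) = {w}

/-! A map `π + ϖ : Y +_g Z → X +_f W` with `π`, `ϖ` continuous is continuous as soon as
`g (π⁻¹ K) ⊆ ϖ⁻¹ (f K)` for all closed `K`, and conversely when `f`, `g` are admissible.
All four claims thus become inclusions between pullbacks, which follow from monotonicity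
of admissible maps and from `ϖ⁻¹` of a closed set being closed. -/

section Glueing

variable {X Y Z W : Type*} [TopologicalSpace X] [TopologicalSpace Y]
  [TopologicalSpace Z] [TopologicalSpace W]

theorem Admissible.mono {f : Set X → Set W} (hf : Admissible f) {A B : Set X}
    (hA : IsClosed A) (hB : IsClosed B) (hAB : A ⊆ B) : f A ⊆ f B := by
  rw [← union_eq_self_of_subset_left hAB, hf.2.1 A B hA hB]
  exact subset_union_left

theorem Admissible.pullbackAW {f : Set X → Set W} (hf : Admissible f) (π : Y → X)
    (ϖ : Z → W) : Admissible (pullbackAW f π ϖ) := by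
  refine ⟨fun _ _ => isClosed_closure, fun A B _ _ => ?_, ?_⟩
  · simp only [Paper.pullbackAW, image_union, closure_union,
      hf.2.1 _ _ isClosed_closure isClosed_closure, preimage_union]
  · simp [Paper.pullbackAW, hf.2.2]

theorem empty_mem_AWClosed {f : Set X → Set W} (hf : Admissible f) :
    (∅ : Set (X ⊕ W)) ∈ AWClosed f :=
  ⟨isClosed_empty, isClosed_empty, by simp [hf.2.2]⟩

theorem union_mem_AWClosed {f : Set X → Set W} (hf : Admissible f) {C D : Set (X ⊕ W)}
    (hC : C ∈ AWClosed f) (hD : D ∈ AWClosed f) : C ∪ D ∈ AWClosed f := by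
  refine ⟨hC.1.union hD.1, hC.2.1.union hD.2.1, ?_⟩
  rw [preimage_union, hf.2.1 _ _ hC.1 hD.1, image_union]
  exact union_subset_union hC.2.2 hD.2.2

theorem sInter_mem_AWClosed {f : Set X → Set W} (hf : Admissible f)
    {T : Set (Set (X ⊕ W))} (hT : T ⊆ AWClosed f) : ⋂₀ T ∈ AWClosed f := by
  have hX : IsClosed (Sum.inl ⁻¹' ⋂₀ T : Set X) := by
    rw [preimage_sInter]
    exact isClosed_biInter fun C hC => (hT hC).1
  refine ⟨hX, ?_, subset_sInter fun C hC => ?_⟩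
  · rw [preimage_sInter]
    exact isClosed_biInter fun C hC => (hT hC).2.1
  · refine (image_mono ?_).trans (hT hC).2.2
    exact hf.mono hX (hT hC).1 (preimage_mono (sInter_subset_of_mem hC))

/-- For admissible `f`, `AWClosed f` is already the family of closed sets of a topology,
which must then be `AWTop f`. -/
theorem isClosed_AWTop_iff {f : Set X → Set W} (hf : Admissible f) {C : Set (X ⊕ W)} :
    IsClosed[AWTop f] C ↔ C ∈ AWClosed f := by
  let t := TopologicalSpace.ofClosed (AWClosed f) (empty_mem_AWClosed hf)
    (fun _ => sInter_mem_AWClosed hf) (fun _ hC _ hD => union_mem_AWClosed hf hC hD)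
  have ht : AWTop f = t := by
    refine le_antisymm (fun U (hU : Uᶜ ∈ AWClosed f) => ?_) (le_generateFrom ?_)
    · exact .basic _ ⟨Uᶜ, hU, compl_compl U⟩
    · rintro _ ⟨D, hD, rfl⟩
      show Dᶜᶜ ∈ AWClosed f
      rwa [compl_compl]
  rw [ht, ← isOpen_compl_iff]
  show Cᶜᶜ ∈ AWClosed f ↔ _
  rw [compl_compl]

theorem isClosed_AWTop_of_mem_AWClosed {f : Set X → Set W} {C : Set (X ⊕ W)}
    (hC : C ∈ AWClosed f) : IsClosed[AWTop f] C :=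
  @IsClosed.mk _ (AWTop f) C (.basic _ ⟨C, hC, rfl⟩)

theorem continuous_sumMap_of_subset {f : Set X → Set W} {g : Set Y → Set Z}
    {π : Y → X} {ϖ : Z → W} (hπ : Continuous π) (hϖ : Continuous ϖ)
    (H : ∀ K : Set X, IsClosed K → g (π ⁻¹' K) ⊆ ϖ ⁻¹' f K) :
    Continuous[AWTop g, AWTop f] (Sum.map π ϖ) := by
  refine continuous_generateFrom_iff.2 ?_
  rintro _ ⟨C, ⟨hX, hW, hfC⟩, rfl⟩
  rw [preimage_compl, @isOpen_compl_iff]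
  refine isClosed_AWTop_of_mem_AWClosed ⟨hX.preimage hπ, hW.preimage hϖ, ?_⟩
  exact image_subset_iff.2 ((H _ hX).trans (preimage_mono (image_subset_iff.1 hfC)))

/-- The converse of `continuous_sumMap_of_subset`: test continuity on the closed set
`K ⊔ f K` of `X +_f W`. -/
theorem subset_preimage_of_continuous_sumMap {f : Set X → Set W} {g : Set Y → Set Z}
    {π : Y → X} {ϖ : Z → W} (hf : Admissible f) (hg : Admissible g)
    (hcont : Continuous[AWTop g, AWTop f] (Sum.map π ϖ)) {K : Set X} (hK : IsClosed K) :
    g (π ⁻¹' K) ⊆ ϖ ⁻¹' f K := by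
  have hD : (Sum.elim K (f K) : Set (X ⊕ W)) ∈ AWClosed f :=
    ⟨hK, hf.1 K hK, image_subset_iff.2 subset_rfl⟩
  have hpre := (isClosed_AWTop_iff hg).1
    (@IsClosed.preimage _ _ (AWTop g) (AWTop f) _ hcont _ (isClosed_AWTop_of_mem_AWClosed hD))
  exact fun z hz => hpre.2.2 ⟨z, hz, rfl⟩

theorem continuous_sumMap_pullbackAW {f : Set X → Set W} (hf : Admissible f)
    {π : Y → X} {ϖ : Z → W} (hπ : Continuous π) (hϖ : Continuous ϖ) :
    Continuous[AWTop (pullbackAW f π ϖ), AWTop f] (Sum.map π ϖ) := by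
  refine continuous_sumMap_of_subset hπ hϖ fun K hK => ?_
  refine closure_minimal (preimage_mono ?_) ((hf.1 K hK).preimage hϖ)
  exact hf.mono isClosed_closure hK (closure_minimal (image_preimage_subset π K) hK)

theorem subset_pullbackAW_of_continuous {f : Set X → Set W} {g : Set Y → Set Z}
    {π : Y → X} {ϖ : Z → W} (hf : Admissible f) (hg : Admissible g) (hπ : Continuous π)
    (hcont : Continuous[AWTop g, AWTop f] (Sum.map π ϖ)) {A : Set Y} (hA : IsClosed A) :
    g A ⊆ pullbackAW f π ϖ A := by
  have hAK : A ⊆ π ⁻¹' closure (π '' A) := fun y hy => subset_closure (mem_image_of_mem π hy)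
  calc g A ⊆ g (π ⁻¹' closure (π '' A)) :=
        hg.mono hA (isClosed_closure.preimage hπ) hAK
    _ ⊆ ϖ ⁻¹' f (closure (π '' A)) :=
        subset_preimage_of_continuous_sumMap hf hg hcont isClosed_closure
    _ ⊆ pullbackAW f π ϖ A := subset_closure

theorem pullbackAW_subset_preimage_pullbackAW_id {Y : Type*} (f : Set X → Set W)
    (π : Y → X) {ϖ : Z → W} (hϖ : Continuous ϖ) (A : Set Y) :
    pullbackAW f π ϖ A ⊆ ϖ ⁻¹' pullbackAW f π id A :=
  closure_minimal (preimage_mono subset_closure) (isClosed_closure.preimage hϖ)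

end Glueing

/-- with `f* = ` pullback of `f` w.r.t. `π, id_W`, `(f*)* = ` pullback of
`f*` w.r.t. `id_Y, ϖ`, and `f** = ` pullback of `f` w.r.t. `π, ϖ`, the maps
`id+id : Y +_{f**} Z → Y +_{(f*)*} Z`, `id+ϖ : Y +_{(f*)*} Z → Y +_{f*} W` and
`π+id : Y +_{f*} W → X +_f W` are continuous; consequently for every admissible `g`
with `π+ϖ : Y +_g Z → X +_f W` continuous, `id+ϖ : Y +_g Z → Y +_{f*} W` is continuous. -/
theorem stmt4 {X Y Z W : Type*} [TopologicalSpace X] [TopologicalSpace Y]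
    [TopologicalSpace Z] [TopologicalSpace W]
    (f : Set X → Set W) (hf : Admissible f)
    (π : Y → X) (ϖ : Z → W) (hπ : Continuous π) (hϖ : Continuous ϖ) :
    Continuous[AWTop (pullbackAW f π ϖ),
        AWTop (pullbackAW (pullbackAW f π (id : W → W)) (id : Y → Y) ϖ)]
      (id : Y ⊕ Z → Y ⊕ Z) ∧
    Continuous[AWTop (pullbackAW (pullbackAW f π (id : W → W)) (id : Y → Y) ϖ),
        AWTop (pullbackAW f π (id : W → W))]
      (Sum.map (id : Y → Y) ϖ) ∧
    Continuous[AWTop (pullbackAW f π (id : W → W)), AWTop f]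
      (Sum.map π (id : W → W)) ∧
    ∀ g : Set Y → Set Z, Admissible g →
      Continuous[AWTop g, AWTop f] (Sum.map π ϖ) →
      Continuous[AWTop g, AWTop (pullbackAW f π (id : W → W))] (Sum.map (id : Y → Y) ϖ) := by
  refine ⟨?_, continuous_sumMap_pullbackAW (hf.pullbackAW π id) continuous_id hϖ,
    continuous_sumMap_pullbackAW hf hπ continuous_id, fun g hg hcont => ?_⟩
  · rw [← Sum.map_id_id]
    refine continuous_sumMap_of_subset continuous_id continuous_id fun K hK => ?_
    show pullbackAW f π ϖ K ⊆ closure (ϖ ⁻¹' pullbackAW f π id (closure (id '' K)))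
    rw [image_id, hK.closure_eq]
    exact (pullbackAW_subset_preimage_pullbackAW_id f π hϖ K).trans subset_closure
  · refine continuous_sumMap_of_subset continuous_id hϖ fun A hA => ?_
    exact (subset_pullbackAW_of_continuous hf hg hπ hcont hA).trans
      (pullbackAW_subset_preimage_pullbackAW_id f π hϖ A)

end Paper
end

section
/- Let G be a group, X a Hausdorff locally compact paracompact space and φ : G ↷ X a properly discontinuous and cocompact action by homeomorphisms. Then A = {Sat(U₁) ∘ … ∘ Sat(Uₙ) : n ≥ 1, U₁, …, Uₙ topologically bounded subsets of X} is a basis for the coarse structure ε_φ; that is, A satisfies: some member of A contains the diagonal ΔX; any two members of A are contained in a common member of A; A is closed under inverses and compositions; and every e ∈ ε_φ is contained in some member of A. -/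
/-!
Cocompactness gives a compact `K` whose translates cover `X`, so `Δ_X ⊆ Sat(K)`. Replacing each
`Uᵢ` by `Uᵢ ∪ K` makes any member of the family reflexive without shrinking it, and two reflexive
relations both lie in their composite; this gives directedness. Each `Sat(U)` is symmetric, so
reversing and concatenating lists give closure under inverses and compositions. Consequently the
relations lying below some member of the family form a coarse structure containing the generators
`Sat(U)`, hence containing `ε_φ`.
-/

namespace Paper

open Set Topology

/-- The composition `e₁ ∘ e₂ ∘ … ∘ eₙ` of a list of relations (the empty composition
being the diagonal, which is neutral for `compRel`). -/
def listComp {X : Type*} (l : List (Set (X × X))) : Set (X × X) :=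
  l.foldr compRel (Set.diagonal X)

/-- The family `A = {Sat(U₁) ∘ … ∘ Sat(Uₙ) : n ≥ 1, Uᵢ topologically bounded}`. -/
def SatBasis {G X : Type*} [TopologicalSpace X] (φ : G → X → X) : Set (Set (X × X)) :=
  {e | ∃ l : List (Set X), l ≠ [] ∧ (∀ U ∈ l, TopBounded U) ∧
    e = listComp (l.map (Sat φ))}

section Relations

variable {X : Type*}

lemma compRel_diagonal_left (e : Set (X × X)) : compRel (diagonal X) e = e := by
  ext ⟨a, b⟩
  constructor
  · rintro ⟨c, (rfl : a = c), h⟩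
    exact h
  · exact fun h => ⟨a, rfl, h⟩

lemma compRel_diagonal_right (e : Set (X × X)) : compRel e (diagonal X) = e := by
  ext ⟨a, b⟩
  constructor
  · rintro ⟨c, h, (rfl : c = b)⟩
    exact h
  · exact fun h => ⟨b, h, rfl⟩

lemma compRel_assoc (a b c : Set (X × X)) :
    compRel (compRel a b) c = compRel a (compRel b c) := by
  ext p
  constructor
  · rintro ⟨d, ⟨e, h₁, h₂⟩, h₃⟩
    exact ⟨e, h₁, d, h₂, h₃⟩
  · rintro ⟨d, h₁, e, h₂, h₃⟩
    exact ⟨e, ⟨d, h₁, h₂⟩, h₃⟩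

lemma compRel_mono {a b a' b' : Set (X × X)} (ha : a ⊆ a') (hb : b ⊆ b') :
    compRel a b ⊆ compRel a' b' := by
  rintro p ⟨c, h₁, h₂⟩
  exact ⟨c, ha h₁, hb h₂⟩

lemma subset_compRel_left {a b : Set (X × X)} (hb : diagonal X ⊆ b) : a ⊆ compRel a b :=
  fun p hp => ⟨p.2, hp, hb rfl⟩

lemma subset_compRel_right {a b : Set (X × X)} (ha : diagonal X ⊆ a) : b ⊆ compRel a b :=
  fun p hp => ⟨p.1, ha rfl, hp⟩

lemma invRel_compRel (a b : Set (X × X)) :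
    invRel (compRel a b) = compRel (invRel b) (invRel a) := by
  ext p
  exact ⟨fun ⟨c, h₁, h₂⟩ => ⟨c, h₂, h₁⟩, fun ⟨c, h₁, h₂⟩ => ⟨c, h₂, h₁⟩⟩

lemma invRel_diagonal : invRel (diagonal X) = diagonal X := by
  ext p
  exact eq_comm

lemma listComp_append (l l' : List (Set (X × X))) :
    listComp (l ++ l') = compRel (listComp l) (listComp l') := by
  induction l with
  | nil => exact (compRel_diagonal_left _).symm
  | cons a l ih => exact (congrArg (compRel a) ih).trans (compRel_assoc a _ _).symm

lemma invRel_listComp (l : List (Set (X × X))) :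
    invRel (listComp l) = listComp (l.reverse.map invRel) := by
  induction l with
  | nil => exact invRel_diagonal
  | cons a l ih =>
    rw [List.reverse_cons, List.map_append, listComp_append, ← ih]
    simp only [listComp, List.foldr_cons, List.map_cons, List.map_nil, List.foldr_nil,
      compRel_diagonal_right, invRel_compRel]

lemma diagonal_subset_listComp {l : List (Set (X × X))} (h : ∀ a ∈ l, diagonal X ⊆ a) :
    diagonal X ⊆ listComp l := by
  induction l with
  | nil => exact subset_rfl
  | cons a l ih =>
    calc diagonal X = compRel (diagonal X) (diagonal X) := (compRel_diagonal_left _).symm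
      _ ⊆ listComp (a :: l) :=
        compRel_mono (h a List.mem_cons_self) (ih fun b hb => h b (List.mem_cons_of_mem a hb))

lemma listComp_map_mono {α : Type*} {f g : α → Set (X × X)} {l : List α}
    (h : ∀ U ∈ l, f U ⊆ g U) : listComp (l.map f) ⊆ listComp (l.map g) := by
  induction l with
  | nil => exact subset_rfl
  | cons a l ih =>
    exact compRel_mono (h a List.mem_cons_self) (ih fun b hb => h b (List.mem_cons_of_mem a hb))

lemma genCoarse_subset {A ε : Set (Set (X × X))} (hε : IsCoarseStructure ε) (hA : A ⊆ ε) :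
    genCoarse A ⊆ ε :=
  sInter_subset_of_mem ⟨hε, hA⟩

lemma isCoarseStructure_lowerClosure {B : Set (Set (X × X))}
    (hdiag : ∃ b ∈ B, diagonal X ⊆ b)
    (hunion : ∀ b ∈ B, ∀ b' ∈ B, ∃ b'' ∈ B, b ∪ b' ⊆ b'')
    (hinv : ∀ b ∈ B, invRel b ∈ B) (hcomp : ∀ b ∈ B, ∀ b' ∈ B, compRel b b' ∈ B) :
    IsCoarseStructure (lowerClosure B : Set (Set (X × X))) := by
  simp only [IsCoarseStructure, SetLike.mem_coe, mem_lowerClosure]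
  refine ⟨hdiag, ?_, ?_, ?_, ?_⟩
  · rintro e ⟨b, hb, he⟩ e' he'
    exact ⟨b, hb, he'.trans he⟩
  · rintro e ⟨b, hb, he⟩ e' ⟨b', hb', he'⟩
    obtain ⟨b'', hb'', hsub⟩ := hunion b hb b' hb'
    exact ⟨b'', hb'', (union_subset_union he he').trans hsub⟩
  · rintro e ⟨b, hb, he⟩
    exact ⟨invRel b, hinv b hb, fun p hp => he hp⟩
  · rintro e ⟨b, hb, he⟩ e' ⟨b', hb', he'⟩
    exact ⟨compRel b b', hcomp b hb b' hb', compRel_mono he he'⟩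

end Relations

lemma TopBounded.union {X : Type*} [TopologicalSpace X] {A B : Set X}
    (hA : TopBounded A) (hB : TopBounded B) : TopBounded (A ∪ B) := by
  rw [TopBounded, closure_union]
  exact IsCompact.union hA hB

section Saturation

variable {G X : Type*} (φ : G → X → X)

lemma Sat_mono {A B : Set X} (h : A ⊆ B) : Sat φ A ⊆ Sat φ B := by
  rintro p ⟨g, x, hx, x', hx', rfl⟩
  exact ⟨g, x, h hx, x', h hx', rfl⟩

lemma invRel_Sat (A : Set X) : invRel (Sat φ A) = Sat φ A := by
  ext ⟨a, b⟩
  constructor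
  · rintro ⟨g, x, hx, x', hx', h⟩
    obtain ⟨rfl, rfl⟩ := Prod.ext_iff.mp h
    exact ⟨g, x', hx', x, hx, rfl⟩
  · rintro ⟨g, x, hx, x', hx', h⟩
    obtain ⟨rfl, rfl⟩ := Prod.ext_iff.mp h
    exact ⟨g, x', hx', x, hx, rfl⟩

lemma diagonal_subset_Sat_of_iUnion_image_eq_univ {K : Set X}
    (hK : ⋃ g : G, φ g '' K = univ) : diagonal X ⊆ Sat φ K := by
  rintro ⟨x, y⟩ (rfl : x = y)
  obtain ⟨_, ⟨g, rfl⟩, k, hk, rfl⟩ := hK.symm ▸ mem_univ x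
  exact ⟨g, k, hk, k, hk, rfl⟩

variable [TopologicalSpace X]

lemma Sat_mem_SatBasis {A : Set X} (hA : TopBounded A) : Sat φ A ∈ SatBasis φ :=
  ⟨[A], List.cons_ne_nil _ _, by simpa using hA, (compRel_diagonal_right _).symm⟩

namespace SatBasis

variable {φ}

lemma invRel_mem {e : Set (X × X)} (he : e ∈ SatBasis φ) : invRel e ∈ SatBasis φ := by
  obtain ⟨l, hl, hlb, rfl⟩ := he
  refine ⟨l.reverse, by simpa using hl, fun U hU => hlb U (List.mem_reverse.mp hU), ?_⟩
  rw [invRel_listComp, ← List.map_reverse, List.map_map]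
  exact congrArg listComp (List.map_congr_left fun U _ => invRel_Sat φ U)

lemma compRel_mem {e e' : Set (X × X)} (he : e ∈ SatBasis φ) (he' : e' ∈ SatBasis φ) :
    compRel e e' ∈ SatBasis φ := by
  obtain ⟨l, hl, hlb, rfl⟩ := he
  obtain ⟨l', -, hlb', rfl⟩ := he'
  refine ⟨l ++ l', by simp [hl], fun U hU => ?_, by rw [List.map_append, listComp_append]⟩
  rcases List.mem_append.mp hU with hU | hU
  exacts [hlb U hU, hlb' U hU]

lemma exists_superset_diagonal_subset {K : Set X} (hKb : TopBounded K)
    (hK : diagonal X ⊆ Sat φ K) {e : Set (X × X)} (he : e ∈ SatBasis φ) :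
    ∃ f ∈ SatBasis φ, e ⊆ f ∧ diagonal X ⊆ f := by
  obtain ⟨l, hl, hlb, rfl⟩ := he
  refine ⟨listComp ((l.map (· ∪ K)).map (Sat φ)), ⟨l.map (· ∪ K), by simpa using hl, ?_, rfl⟩,
    ?_, diagonal_subset_listComp ?_⟩
  · simp only [List.mem_map, forall_exists_index, and_imp, forall_apply_eq_imp_iff₂]
    exact fun U hU => (hlb U hU).union hKb
  · rw [List.map_map]
    exact listComp_map_mono fun U _ => Sat_mono φ subset_union_left
  · simp only [List.map_map, List.mem_map, forall_exists_index, and_imp, forall_apply_eq_imp_iff₂]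
    exact fun U _ => hK.trans (Sat_mono φ subset_union_right)

lemma exists_union_subset {K : Set X} (hKb : TopBounded K) (hK : diagonal X ⊆ Sat φ K)
    {e e' : Set (X × X)} (he : e ∈ SatBasis φ) (he' : e' ∈ SatBasis φ) :
    ∃ e'' ∈ SatBasis φ, e ∪ e' ⊆ e'' := by
  obtain ⟨f, hf, hef, hdiag⟩ := exists_superset_diagonal_subset hKb hK he
  obtain ⟨f', hf', hef', hdiag'⟩ := exists_superset_diagonal_subset hKb hK he'
  exact ⟨compRel f f', compRel_mem hf hf', union_subset
    (hef.trans (subset_compRel_left hdiag')) (hef'.trans (subset_compRel_right hdiag))⟩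

end SatBasis

end Saturation

theorem stmt6_general {G X : Type*} [TopologicalSpace X] [T2Space X]
    (φ : G → X → X)
    (hcc : CocompactAct φ) :
    (∃ e ∈ SatBasis φ, Set.diagonal X ⊆ e) ∧
    (∀ e ∈ SatBasis φ, ∀ e' ∈ SatBasis φ, ∃ e'' ∈ SatBasis φ, e ∪ e' ⊆ e'') ∧
    (∀ e ∈ SatBasis φ, invRel e ∈ SatBasis φ) ∧
    (∀ e ∈ SatBasis φ, ∀ e' ∈ SatBasis φ, compRel e e' ∈ SatBasis φ) ∧
    (∀ e ∈ coarseOfAction φ, ∃ e' ∈ SatBasis φ, e ⊆ e') := by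
  obtain ⟨K, hKc, hKcover⟩ := hcc
  have hKb : TopBounded K := by rwa [TopBounded, hKc.isClosed.closure_eq]
  have hK := diagonal_subset_Sat_of_iUnion_image_eq_univ φ hKcover
  have hdiag : ∃ e ∈ SatBasis φ, diagonal X ⊆ e := ⟨Sat φ K, Sat_mem_SatBasis φ hKb, hK⟩
  have hunion : ∀ e ∈ SatBasis φ, ∀ e' ∈ SatBasis φ, ∃ e'' ∈ SatBasis φ, e ∪ e' ⊆ e'' :=
    fun _ he _ he' => SatBasis.exists_union_subset hKb hK he he'
  have hinv : ∀ e ∈ SatBasis φ, invRel e ∈ SatBasis φ := fun _ => SatBasis.invRel_mem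
  have hcomp : ∀ e ∈ SatBasis φ, ∀ e' ∈ SatBasis φ, compRel e e' ∈ SatBasis φ :=
    fun _ he _ => SatBasis.compRel_mem he
  refine ⟨hdiag, hunion, hinv, hcomp, fun e he => mem_lowerClosure.mp ?_⟩
  refine genCoarse_subset (isCoarseStructure_lowerClosure hdiag hunion hinv hcomp) ?_ he
  rintro _ ⟨A, hA, rfl⟩
  exact subset_lowerClosure (Sat_mem_SatBasis φ hA)

/-- `SatBasis φ` is a basis for the coarse structure `ε_φ`. -/
theorem stmt6 {G X : Type*} [Group G] [TopologicalSpace X] [T2Space X]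
    [LocallyCompactSpace X] [ParacompactSpace X]
    (φ : G → X → X) (hact : IsActionByHomeos φ) (hpd : ProperlyDisc φ)
    (hcc : CocompactAct φ) :
    (∃ e ∈ SatBasis φ, Set.diagonal X ⊆ e) ∧
    (∀ e ∈ SatBasis φ, ∀ e' ∈ SatBasis φ, ∃ e'' ∈ SatBasis φ, e ∪ e' ⊆ e'') ∧
    (∀ e ∈ SatBasis φ, invRel e ∈ SatBasis φ) ∧
    (∀ e ∈ SatBasis φ, ∀ e' ∈ SatBasis φ, compRel e e' ∈ SatBasis φ) ∧
    (∀ e ∈ coarseOfAction φ, ∃ e' ∈ SatBasis φ, e ⊆ e') :=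
  stmt6_general φ hcc

end Paper
end

section
/- Let G be a countable group, X a Hausdorff locally compact space with countable basis, φ : G ↷ X a properly discontinuous and cocompact action by homeomorphisms, K ⊆ X a fundamental domain (a compact set with φ(G, K) = X), and x₀ ∈ X. Let ψ : X → G be any coarse inverse of the coarse equivalence φ_{x₀} : (G, ε_G) → (X, ε_φ), g ↦ φ(g, x₀). Let G +_∂ Y be a metrizable Hausdorff compactification of G (discrete) to which the left multiplication action of G extends continuously and which is group-theoretically perspective. Then for every subset S ⊆ X closed in X, Cl_Y(∂(ψ(S))) = ∂({g ∈ G : φ(g, K) ∩ S ≠ ∅}); that is, the pullback of ∂ along ψ coincides with the map ∂_Π(S) = ∂(Π_K(S)), where Π_K(S) = {g ∈ G : φ(g, K) ∩ S ≠ ∅}. -/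
namespace Paper

open Set Topology Pointwise

section Aux

open Pointwise

/-- Generators belong to the generated coarse structure. -/
lemma mem_genCoarse_self {X : Type*} (A : Set (Set (X × X))) : A ⊆ genCoarse A :=
  fun _ he => Set.mem_sInter.2 fun _ hε => hε.2 he

lemma satMul_mono {G : Type*} [Group G] {U V : Set G} (h : U ⊆ V) :
    SatMul U ⊆ SatMul V := by
  rintro p ⟨g, u, hu, u', hu', rfl⟩
  exact ⟨g, u, h hu, u', h hu', rfl⟩

lemma satMul_symm {G : Type*} [Group G] {U : Set G} {a b : G}
    (h : (a, b) ∈ SatMul U) : (b, a) ∈ SatMul U := by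
  obtain ⟨g, u, hu, u', hu', heq⟩ := h
  simp only [Prod.mk.injEq] at heq
  exact ⟨g, u', hu', u, hu, by rw [heq.1, heq.2]⟩

lemma satMul_trans {G : Type*} [Group G] {U : Set G} {a b : G}
    (h : (a, b) ∈ SatMul U) : ∃ f ∈ U⁻¹ * U, b = a * f := by
  obtain ⟨g, u, hu, u', hu', heq⟩ := h
  have h1 : a = g * u := congrArg Prod.fst heq
  have h2 : b = g * u' := congrArg Prod.snd heq
  refine ⟨u⁻¹ * u', Set.mul_mem_mul (Set.inv_mem_inv.2 hu) hu', ?_⟩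
  rw [h1, h2, mul_assoc, mul_inv_cancel_left]

/-- Every entourage of `coarseGroup G` is contained in `SatMul U` for some finite `U`. -/
lemma coarseGroup_subset {G : Type*} [Group G] {e : Set (G × G)}
    (he : e ∈ coarseGroup G) : ∃ U : Set G, U.Finite ∧ e ⊆ SatMul U := by
  refine Set.mem_sInter.1 he {e | ∃ U : Set G, U.Finite ∧ e ⊆ SatMul U} ⟨⟨?_, ?_, ?_, ?_, ?_⟩, ?_⟩
  · refine ⟨{1}, Set.finite_singleton 1, ?_⟩
    rintro ⟨a, b⟩ hab
    have : a = b := hab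
    exact ⟨a, 1, rfl, 1, rfl, by simp [this]⟩
  · rintro e ⟨U, hU, hsub⟩ e' h
    exact ⟨U, hU, h.trans hsub⟩
  · rintro e ⟨U, hU, hsub⟩ e' ⟨V, hV, hsub'⟩
    exact ⟨U ∪ V, hU.union hV, Set.union_subset
      (hsub.trans (satMul_mono Set.subset_union_left))
      (hsub'.trans (satMul_mono Set.subset_union_right))⟩
  · rintro e ⟨U, hU, hsub⟩
    exact ⟨U, hU, fun p hp => satMul_symm (hsub hp)⟩
  · rintro e ⟨U, hU, hsub⟩ e' ⟨V, hV, hsub'⟩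
    refine ⟨U ∪ U * (V⁻¹ * V), hU.union (hU.mul (hV.inv.mul hV)), ?_⟩
    rintro ⟨a, b⟩ ⟨c, hac, hcb⟩
    obtain ⟨g, u, hu, u', hu', heq⟩ := hsub hac
    have h1 : a = g * u := congrArg Prod.fst heq
    have h2 : c = g * u' := congrArg Prod.snd heq
    obtain ⟨f, hf, hbf⟩ := satMul_trans (hsub' hcb)
    have h3 : b = c * f := hbf
    refine ⟨g, u, Set.mem_union_left _ hu, u' * f,
      Set.mem_union_right _ (Set.mul_mem_mul hu' hf), ?_⟩
    rw [Prod.mk.injEq]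
    exact ⟨h1, by rw [h3, h2, mul_assoc]⟩
  · rintro e ⟨U, hU, rfl⟩
    exact ⟨U, hU, subset_rfl⟩

variable {G Y : Type*} [TopologicalSpace G] [DiscreteTopology G] [TopologicalSpace Y]
  {bd : Set G → Set Y}

lemma bdMono (hadm : Admissible bd) {A B : Set G} (h : A ⊆ B) : bd A ⊆ bd B := by
  have h2 := hadm.2.1 A B (isClosed_discrete _) (isClosed_discrete _)
  rw [Set.union_eq_self_of_subset_left h] at h2
  rw [h2]
  exact Set.subset_union_left

lemma awClosed_union (hadm : Admissible bd) {C D : Set (G ⊕ Y)}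
    (hC : C ∈ AWClosed bd) (hD : D ∈ AWClosed bd) : C ∪ D ∈ AWClosed bd := by
  refine ⟨isClosed_discrete _, ?_, ?_⟩
  · rw [Set.preimage_union]; exact hC.2.1.union hD.2.1
  · rw [Set.preimage_union, hadm.2.1 _ _ (isClosed_discrete _) (isClosed_discrete _),
      Set.image_union]
    exact Set.union_subset_union hC.2.2 hD.2.2

omit [DiscreteTopology G] in
lemma awClosed_isClosed {C : Set (G ⊕ Y)} (hC : C ∈ AWClosed bd) :
    IsClosed[AWTop bd] C := by
  letI := AWTop bd
  rw [← isOpen_compl_iff]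
  exact TopologicalSpace.GenerateOpen.basic _ ⟨C, hC, rfl⟩

/-- Conversely, every closed set of the glueing topology is in `AWClosed` (uses
discreteness of `G` and admissibility). -/
lemma awtop_closed_mem (hadm : Admissible bd) {C : Set (G ⊕ Y)}
    (hC : IsClosed[AWTop bd] C) : C ∈ AWClosed bd := by
  have key : ∀ s : Set (G ⊕ Y), TopologicalSpace.GenerateOpen (compl '' AWClosed bd) s →
      sᶜ ∈ AWClosed bd := by
    intro s hs
    induction hs with
    | basic t ht =>
        obtain ⟨D, hD, rfl⟩ := ht
        simpa using hD
    | univ =>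
        refine ⟨?_, ?_, ?_⟩
        · simp
        · simp
        · simp [hadm.2.2]
    | inter s t _ _ ihs iht =>
        rw [Set.compl_inter]
        exact awClosed_union hadm ihs iht
    | sUnion S _ ih =>
        refine ⟨isClosed_discrete _, ?_, ?_⟩
        · have : Sum.inr ⁻¹' (⋃₀ S)ᶜ = ⋂ s ∈ S, Sum.inr ⁻¹' sᶜ := by
            ext y; simp
          rw [this]
          exact isClosed_biInter fun s hs => (ih s hs).2.1
        · rintro z ⟨y, hy, rfl⟩
          simp only [Set.mem_compl_iff, Set.mem_sUnion, not_exists]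
          intro t
          rw [not_and']
          intro hyt htS
          have hsub : Sum.inl ⁻¹' (⋃₀ S)ᶜ ⊆ Sum.inl ⁻¹' tᶜ := by
            intro a ha
            simp only [Set.mem_preimage, Set.mem_compl_iff] at ha ⊢
            exact fun h => ha ⟨t, htS, h⟩
          have : y ∈ bd (Sum.inl ⁻¹' tᶜ) := bdMono hadm hsub hy
          exact (ih t htS).2.2 ⟨y, this, rfl⟩ hyt
  have := key Cᶜ hC.isOpen_compl
  simpa using this

/-- The key characterisation: `y ∈ bd A` iff `inr y` is in the closure of `inl '' A` in
the glueing topology. -/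
lemma bd_mem_iff (hadm : Admissible bd) (A : Set G) (y : Y) :
    y ∈ bd A ↔ Sum.inr y ∈ @closure _ (AWTop bd) (Sum.inl '' A) := by
  letI := AWTop bd
  constructor
  · intro hy
    have hcl : IsClosed (closure (Sum.inl '' A : Set (G ⊕ Y))) := isClosed_closure
    have hmem := awtop_closed_mem hadm hcl
    have hsub : A ⊆ Sum.inl ⁻¹' (closure (Sum.inl '' A : Set (G ⊕ Y))) :=
      fun a ha => subset_closure ⟨a, ha, rfl⟩
    exact hmem.2.2 ⟨y, bdMono hadm hsub hy, rfl⟩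
  · intro hy
    have hC : (Sum.inl '' A ∪ Sum.inr '' bd A) ∈ AWClosed bd := by
      refine ⟨?_, ?_, ?_⟩
      · have : Sum.inl ⁻¹' (Sum.inl '' A ∪ Sum.inr '' bd A) = A := by
          ext a; simp
        rw [this]; exact isClosed_discrete _
      · have : Sum.inr ⁻¹' (Sum.inl '' A ∪ Sum.inr '' bd A) = bd A := by
          ext a; simp
        rw [this]; exact hadm.1 A (isClosed_discrete _)
      · have : Sum.inl ⁻¹' (Sum.inl '' A ∪ Sum.inr '' bd A) = A := by
          ext a; simp
        rw [this]
        exact Set.subset_union_right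
    have hclosed := awClosed_isClosed hC
    have hsub := closure_minimal (Set.subset_union_left :
      Sum.inl '' A ⊆ Sum.inl '' A ∪ Sum.inr '' bd A) hclosed
    rcases hsub hy with h | ⟨y', hy', heq⟩
    · obtain ⟨a, _, h⟩ := h
      exact absurd h (by simp)
    · rwa [← Sum.inr_injective heq]

/-- Two subsets of `G` at finite "right distance" have the same boundary, by
group-theoretic perspectivity: one-sided version. -/
lemma closeBd_le [Group G] (hadm : Admissible bd)
    (hpers : GTPerspective (fun g h : G => g * h) bd)
    {A B F : Set G} (hF : F.Finite)
    (hAB : ∀ a ∈ A, ∃ b ∈ B, ∃ f ∈ F, a = b * f) : bd A ⊆ bd B := by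
  letI := AWTop bd
  intro y hy
  rw [bd_mem_iff hadm] at hy ⊢
  rw [mem_closure_iff] at hy ⊢
  intro U hU hyU
  obtain ⟨V, hV, hyV, _, hmain⟩ := hpers (insert 1 F) ((hF.insert 1).isCompact) y U hU hyU
  obtain ⟨z, hzV, a, haA, rfl⟩ := hy V hV hyV
  obtain ⟨b, hbB, f, hfF, rfl⟩ := hAB a haA
  have := hmain b ⟨f, Set.mem_insert_of_mem _ hfF, hzV⟩ 1 (Set.mem_insert _ _)
  exact ⟨Sum.inl b, by simpa using this, b, hbB, rfl⟩

lemma closeBd [Group G] (hadm : Admissible bd)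
    (hpers : GTPerspective (fun g h : G => g * h) bd)
    (A B : Set G) {F : Set G} (hF : F.Finite)
    (hAB : ∀ a ∈ A, ∃ b ∈ B, ∃ f ∈ F, a = b * f)
    (hBA : ∀ b ∈ B, ∃ a ∈ A, ∃ f ∈ F, b = a * f) : bd A = bd B :=
  Set.Subset.antisymm (closeBd_le hadm hpers hF hAB) (closeBd_le hadm hpers hF hBA)

end Aux

/-- for a metrizable group-theoretically perspective equivariant
compactification `G +_∂ Y` of the (discrete) group `G`, and any coarse inverse
`ψ : X → G` of the orbit map `g ↦ φ(g, x₀)`, the pullback of `∂` along `ψ` coincides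
with `∂_Π(S) = ∂(Π_K S)`: for every closed `S ⊆ X`,
`Cl_Y(∂(ψ(S))) = ∂({g : φ(g,K) ∩ S ≠ ∅})`. -/
theorem stmt12 {G X Y : Type*} [Group G] [Countable G] [TopologicalSpace G]
    [DiscreteTopology G]
    [TopologicalSpace X] [T2Space X] [LocallyCompactSpace X] [SecondCountableTopology X]
    [TopologicalSpace Y]
    (φ : G → X → X) (hact : IsActionByHomeos φ) (hpd : ProperlyDisc φ)
    (K : Set X) (hK : IsCompact K) (hKfd : (⋃ g : G, φ g '' K) = Set.univ)
    (x₀ : X) (ψ : X → G)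
    (hψ : CoarseMap (coarseOfAction φ) (coarseGroup G) ψ)
    (hφx : CoarseMap (coarseGroup G) (coarseOfAction φ) (fun g => φ g x₀))
    (hqi1 : Close (coarseOfAction φ) (fun x => φ (ψ x) x₀) id)
    (hqi2 : Close (coarseGroup G) (fun g => ψ (φ g x₀)) id)
    (bd : Set G → Set Y) (hcomp : IsCompactification bd)
    (hmetr : @TopologicalSpace.MetrizableSpace (G ⊕ Y) (AWTop bd))
    (Λ : G → (G ⊕ Y) → (G ⊕ Y))
    (hΛcont : ∀ g : G, Continuous[AWTop bd, AWTop bd] (Λ g))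
    (hΛone : ∀ p : G ⊕ Y, Λ 1 p = p)
    (hΛmul : ∀ g h : G, ∀ p : G ⊕ Y, Λ (g * h) p = Λ g (Λ h p))
    (hext : ∀ g h : G, Λ g (Sum.inl h) = Sum.inl (g * h))
    (hpers : GTPerspective (fun g h : G => g * h) bd) :
    ∀ S : Set X, IsClosed S →
      closure (bd (ψ '' S)) = bd {g : G | (φ g '' K ∩ S).Nonempty} := by
  classical
  intro S _
  have hclosedY : IsClosed (bd (ψ '' S)) := hcomp.1.1 _ (isClosed_discrete _)
  rw [hclosedY.closure_eq]
  -- the relevant entourages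
  have htb : TopBounded (K ∪ {x₀}) := by
    have hc : IsCompact (K ∪ {x₀}) := hK.union isCompact_singleton
    unfold TopBounded
    rw [hc.isClosed.closure_eq]
    exact hc
  have he0 : Sat φ (K ∪ {x₀}) ∈ coarseOfAction φ :=
    mem_genCoarse_self _ ⟨_, htb, rfl⟩
  have he1 : Prod.map ψ ψ '' Sat φ (K ∪ {x₀}) ∈ coarseGroup G := hψ.1 _ he0
  obtain ⟨U₁, hU₁f, hU₁⟩ := coarseGroup_subset he1
  obtain ⟨U₂, hU₂f, hU₂⟩ := coarseGroup_subset hqi2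
  -- translation estimates
  have key : ∀ g : G, ∀ x ∈ K,
      (∃ p ∈ (U₁⁻¹ * U₁) * (U₂⁻¹ * U₂), g = ψ (φ g x) * p) ∧
      (∃ q ∈ (U₂⁻¹ * U₂) * (U₁⁻¹ * U₁), ψ (φ g x) = g * q) := by
    intro g x hxK
    have hSat : (φ g x, φ g x₀) ∈ Sat φ (K ∪ {x₀}) :=
      ⟨g, x, Set.mem_union_left _ hxK, x₀, Set.mem_union_right _ rfl, rfl⟩
    have h1 : (ψ (φ g x), ψ (φ g x₀)) ∈ SatMul U₁ :=
      hU₁ ⟨(φ g x, φ g x₀), hSat, rfl⟩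
    have h2 : (ψ (φ g x₀), g) ∈ SatMul U₂ := hU₂ ⟨g, rfl⟩
    constructor
    · obtain ⟨p, hp, hp2⟩ := satMul_trans h1
      obtain ⟨q, hq, hq2⟩ := satMul_trans h2
      exact ⟨p * q, Set.mul_mem_mul hp hq, by rw [← mul_assoc, ← hp2, ← hq2]⟩
    · obtain ⟨q, hq, hq2⟩ := satMul_trans (satMul_symm h2)
      obtain ⟨p, hp, hp2⟩ := satMul_trans (satMul_symm h1)
      exact ⟨q * p, Set.mul_mem_mul hq hp, by rw [← mul_assoc, ← hq2, ← hp2]⟩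
  have hFfin : ((U₁⁻¹ * U₁) * (U₂⁻¹ * U₂) ∪ (U₂⁻¹ * U₂) * (U₁⁻¹ * U₁)).Finite :=
    ((hU₁f.inv.mul hU₁f).mul (hU₂f.inv.mul hU₂f)).union
      ((hU₂f.inv.mul hU₂f).mul (hU₁f.inv.mul hU₁f))
  refine closeBd hcomp.1 hpers _ _ hFfin ?_ ?_
  · -- ψ '' S ⊆ Π · F
    rintro a ⟨s, hsS, rfl⟩
    have hs : s ∈ ⋃ g : G, φ g '' K := hKfd ▸ Set.mem_univ s
    obtain ⟨g, x, hxK, hgx⟩ : ∃ g : G, ∃ x ∈ K, φ g x = s := by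
      simpa using hs
    subst hgx
    obtain ⟨_, ⟨q, hq, hq2⟩⟩ := key g x hxK
    exact ⟨g, ⟨φ g x, ⟨x, hxK, rfl⟩, hsS⟩, q, Set.mem_union_right _ hq, hq2⟩
  · -- Π ⊆ ψ '' S · F
    rintro g ⟨_, ⟨x, hxK, rfl⟩, hsS⟩
    obtain ⟨⟨p, hp, hp2⟩, _⟩ := key g x hxK
    exact ⟨ψ (φ g x), ⟨φ g x, hsS, rfl⟩, p, Set.mem_union_left _ hp, hp2⟩

end Paper
end
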